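/- arXiv:1804.04114 — 4 statements merged into one kernel-verified Lean document; each statement's English description precedes it below -/
import Mathlib

section
/- Let f be a Steinhaus random multiplicative function and q a natural number. For any complex numbers (a_n)_{n≤N}, E[|Σ_{n≤N} a_n f(n)|^{2q}] ≤ (Σ_{n≤N} |a_n|² d_q(n))^q, where d_q(n) is the q-fold divisor function (the number of q-tuples of naturals with product n). -/
open MeasureTheory ProbabilityTheory

/-- A random variable `z` is uniformly distributed on the unit circle if it is of the
form `z = e^{2πiθ}` for a measurable `θ` uniform on `[0,1]`. -/
def UniformUnitCircle {Ω : Type*} [MeasurableSpace Ω] (μ : Measure Ω) (z : Ω → ℂ) : Prop :=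
  ∃ θ : Ω → ℝ, Measurable θ ∧
    Measure.map θ μ = volume.restrict (Set.Icc (0 : ℝ) 1) ∧
    ∀ ω, z ω = Complex.exp (2 * Real.pi * Complex.I * θ ω)

/-- `f` is a Steinhaus random multiplicative function. -/
def IsSteinhaus {Ω : Type*} [MeasurableSpace Ω] (μ : Measure Ω) (f : Ω → ℕ → ℂ) : Prop :=
  iIndepFun (fun (p : Nat.Primes) (ω : Ω) => f ω p) μ ∧
  (∀ p : Nat.Primes, UniformUnitCircle μ fun ω => f ω p) ∧
  ∀ ω n, f ω n = ∏ p ∈ n.primeFactors, f ω p ^ n.factorization p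

/-- The `q`-fold divisor function: the number of `q`-tuples of positive integers whose
product is `n`. -/
def dfold (q n : ℕ) : ℕ :=
  ((Fintype.piFinset fun _ : Fin q => Finset.Icc 1 n).filter fun t => ∏ i, t i = n).card

/-!
Expanding the `q`-th power, `(∑ aₙ f(n))^q = ∑ₜ a_{t₁}⋯a_{t_q} f(t₁⋯t_q)` over `q`-tuples `t`.
The values `f(n)`, `n ≥ 1`, are orthonormal in `L²(μ)`: `f(m) conj f(n)` is a product over the
primes `p ∣ mn` of the independent factors `f(p)^a conj f(p)^b`, each of mean `δ_{ab}`. Grouping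
the tuples by their product and applying Cauchy–Schwarz in each group bounds the `2q`-th moment
by `∑ₜ |a_{t₁}⋯a_{t_q}|² · #{s : s₁⋯s_q = t₁⋯t_q}`, and this count is at most
`d_q(t₁⋯t_q) ≤ d_q(t₁)⋯d_q(t_q)`, since every factorisation of `mn` into `q` factors is the
pointwise product of one of `m` and one of `n`.
-/

open Finset ComplexConjugate

namespace Nat

theorem exists_dvd_and_prod_eq_of_dvd_prod {d m : ℕ} {t : Fin d → ℕ} (h : m ∣ ∏ i, t i) :
    ∃ u : Fin d → ℕ, (∀ i, u i ∣ t i) ∧ ∏ i, u i = m := by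
  induction d generalizing m with
  | zero => exact ⟨Fin.elim0, fun i => i.elim0, by simpa [eq_comm] using h⟩
  | succ d ih =>
    rw [Fin.prod_univ_succ] at h
    obtain ⟨m₀, m', hm₀, hm', rfl⟩ := dvd_mul.mp h
    obtain ⟨u, hu, rfl⟩ := ih hm'
    exact ⟨Fin.cons m₀ u, Fin.cases hm₀ hu, Fin.prod_cons m₀ u⟩

theorem card_finMulAntidiag_mul_le (d m n : ℕ) :
    #(finMulAntidiag d (m * n)) ≤ #(finMulAntidiag d m) * #(finMulAntidiag d n) := by
  rw [← card_product]
  refine card_le_card_of_surjOn (fun uv => uv.1 * uv.2) fun t ht => ?_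
  obtain ⟨htmn, hmn⟩ := mem_finMulAntidiag.mp ht
  obtain ⟨hm, hn⟩ := mul_ne_zero_iff.mp hmn
  obtain ⟨u, hut, hum⟩ := exists_dvd_and_prod_eq_of_dvd_prod (htmn ▸ dvd_mul_right m n)
  have hprod : (∏ i, u i) * ∏ i, t i / u i = m * n := by
    rw [← prod_mul_distrib, ← htmn]
    exact prod_congr rfl fun i _ => Nat.mul_div_cancel' (hut i)
  refine ⟨(u, fun i => t i / u i), ?_, funext fun i => Nat.mul_div_cancel' (hut i)⟩
  simp only [coe_product, Set.mem_prod, mem_coe, mem_finMulAntidiag]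
  rw [hum] at hprod
  exact ⟨⟨hum, hm⟩, Nat.eq_of_mul_eq_mul_left (Nat.pos_of_ne_zero hm) hprod, hn⟩

end Nat

theorem dfold_eq_card_finMulAntidiag (q n : ℕ) : dfold q n = #(Nat.finMulAntidiag q n) := by
  unfold dfold
  congr 1
  ext t
  simp only [mem_filter, Fintype.mem_piFinset, mem_Icc, Nat.mem_finMulAntidiag]
  constructor
  · rintro ⟨ht, rfl⟩
    exact ⟨rfl, prod_ne_zero_iff.mpr fun i _ => (Nat.one_le_iff_ne_zero.mp (ht i).1)⟩
  · rintro ⟨rfl, hn⟩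
    exact ⟨fun i => ⟨Nat.one_le_iff_ne_zero.mpr fun h0 => hn (prod_eq_zero (mem_univ i) h0),
      Nat.le_of_dvd (Nat.pos_of_ne_zero hn) (dvd_prod_of_mem _ (mem_univ i))⟩, rfl⟩

theorem dfold_prod_le {ι : Type*} (q : ℕ) (s : Finset ι) (t : ι → ℕ) :
    dfold q (∏ i ∈ s, t i) ≤ ∏ i ∈ s, dfold q (t i) := by
  simp only [dfold_eq_card_finMulAntidiag]
  exact le_prod_of_submultiplicative (fun n => #(Nat.finMulAntidiag q n))
    (by simp [Nat.finMulAntidiag_one]) (Nat.card_finMulAntidiag_mul_le q) s t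

theorem card_filter_prod_eq_le_dfold {q n : ℕ} (s : Finset (Fin q → ℕ)) (hn : n ≠ 0) :
    #{t ∈ s | ∏ i, t i = n} ≤ dfold q n := by
  rw [dfold_eq_card_finMulAntidiag]
  exact card_le_card fun t ht => Nat.mem_finMulAntidiag.mpr ⟨(mem_filter.mp ht).2, hn⟩

section Orthonormal

variable {Ω : Type*} [MeasurableSpace Ω] {μ : Measure Ω} {κ : Type*} {X : κ → Ω → ℂ}

theorem integral_norm_sum_sq_of_orthonormal [DecidableEq κ] (hX : ∀ i, MemLp (X i) 2 μ)
    {s : Finset κ}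
    (horth : ∀ i ∈ s, ∀ j ∈ s, ∫ ω, X i ω * conj (X j ω) ∂μ = if i = j then 1 else 0)
    (b : κ → ℂ) :
    ∫ ω, ‖∑ i ∈ s, b i * X i ω‖ ^ 2 ∂μ = ∑ i ∈ s, ‖b i‖ ^ 2 := by
  have hint (i j : κ) : Integrable (fun ω => X i ω * conj (X j ω)) μ :=
    (hX i).integrable_mul (hX j).star
  apply Complex.ofReal_injective
  calc ((∫ ω, ‖∑ i ∈ s, b i * X i ω‖ ^ 2 ∂μ : ℝ) : ℂ)
      = ∫ ω, ∑ i ∈ s, ∑ j ∈ s, b i * conj (b j) * (X i ω * conj (X j ω)) ∂μ := by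
        rw [← integral_complex_ofReal]
        congr 1 with ω
        rw [Complex.ofReal_pow, ← Complex.mul_conj', map_sum, sum_mul_sum]
        simp only [map_mul]
        exact sum_congr rfl fun i _ => sum_congr rfl fun j _ => by ring
    _ = ∑ i ∈ s, ∑ j ∈ s, b i * conj (b j) * ∫ ω, X i ω * conj (X j ω) ∂μ := by
        rw [integral_finsetSum _ fun i _ => integrable_finsetSum _ fun j _ =>
          (hint i j).const_mul _]
        refine sum_congr rfl fun i _ => ?_
        rw [integral_finsetSum _ fun j _ => (hint i j).const_mul _]
        exact sum_congr rfl fun j _ => integral_const_mul _ _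
    _ = ((∑ i ∈ s, ‖b i‖ ^ 2 : ℝ) : ℂ) := by
        push_cast
        refine sum_congr rfl fun i hi => ?_
        rw [sum_congr rfl fun j hj => by rw [horth i hi j hj]]
        simp [hi, Complex.mul_conj']

theorem integral_norm_sum_comp_sq_le [DecidableEq κ] {ι : Type*} (hX : ∀ i, MemLp (X i) 2 μ)
    (k : ι → κ) {s : Finset ι}
    (horth : ∀ i ∈ s.image k, ∀ j ∈ s.image k,
      ∫ ω, X i ω * conj (X j ω) ∂μ = if i = j then 1 else 0)
    (c : ι → ℂ) :
    ∫ ω, ‖∑ t ∈ s, c t * X (k t) ω‖ ^ 2 ∂μ ≤ ∑ t ∈ s, #{u ∈ s | k u = k t} * ‖c t‖ ^ 2 := by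
  have hk : ∀ t ∈ s, k t ∈ s.image k := fun t ht => mem_image_of_mem k ht
  have hfiber (ω : Ω) : ∑ t ∈ s, c t * X (k t) ω
      = ∑ n ∈ s.image k, (∑ t ∈ s with k t = n, c t) * X n ω := by
    rw [← sum_fiberwise_of_maps_to hk]
    refine sum_congr rfl fun n _ => ?_
    rw [sum_mul]
    exact sum_congr rfl fun t ht => by rw [(mem_filter.mp ht).2]
  simp_rw [hfiber]
  rw [integral_norm_sum_sq_of_orthonormal hX horth]
  calc ∑ n ∈ s.image k, ‖∑ t ∈ s with k t = n, c t‖ ^ 2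
      ≤ ∑ n ∈ s.image k, #{t ∈ s | k t = n} * ∑ t ∈ s with k t = n, ‖c t‖ ^ 2 := by
        refine sum_le_sum fun n _ => ?_
        exact (pow_le_pow_left₀ (norm_nonneg _) (norm_sum_le _ _) 2).trans
          sq_sum_le_card_mul_sum_sq
    _ = ∑ t ∈ s, #{u ∈ s | k u = k t} * ‖c t‖ ^ 2 := by
        rw [← sum_fiberwise_of_maps_to hk]
        refine sum_congr rfl fun n _ => ?_
        rw [mul_sum]
        exact sum_congr rfl fun t ht => by rw [(mem_filter.mp ht).2]

end Orthonormal

section Circle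

open Complex Real

theorem integral_Icc_exp_two_pi_I_int_mul (k : ℤ) :
    ∫ x in Set.Icc (0 : ℝ) 1, exp (2 * π * I * k * x) = if k = 0 then 1 else 0 := by
  split_ifs with hk
  · simp [hk]
  have hc : 2 * π * I * k ≠ 0 := by simp [Real.pi_ne_zero, I_ne_zero, hk]
  rw [integral_Icc_eq_integral_Ioc, ← intervalIntegral.integral_of_le zero_le_one,
    integral_exp_mul_complex hc,
    show 2 * π * I * k * ((1 : ℝ) : ℂ) = k * (2 * π * I) by push_cast; ring,
    exp_int_mul_two_pi_mul_I]
  simp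

namespace UniformUnitCircle

variable {Ω : Type*} [MeasurableSpace Ω] {μ : Measure Ω} {z : Ω → ℂ}

theorem measurable (hz : UniformUnitCircle μ z) : Measurable z := by
  obtain ⟨θ, hθ, -, hzθ⟩ := hz
  rw [funext hzθ]
  fun_prop

theorem norm_eq_one (hz : UniformUnitCircle μ z) (ω : Ω) : ‖z ω‖ = 1 := by
  obtain ⟨θ, -, -, hzθ⟩ := hz
  rw [hzθ, show 2 * π * I * θ ω = ((2 * π * θ ω : ℝ) : ℂ) * I by push_cast; ring,
    norm_exp_ofReal_mul_I]

theorem integral_pow_mul_conj_pow (hz : UniformUnitCircle μ z) (a b : ℕ) :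
    ∫ ω, z ω ^ a * conj (z ω) ^ b ∂μ = if a = b then 1 else 0 := by
  obtain ⟨θ, hθ, hθμ, hzθ⟩ := hz
  have hexp (ω : Ω) : z ω ^ a * conj (z ω) ^ b
      = exp (2 * π * I * ((a - b : ℤ) : ℂ) * θ ω) := by
    rw [hzθ, ← exp_conj, ← Complex.exp_nat_mul, ← Complex.exp_nat_mul, ← Complex.exp_add]
    congr 1
    simp only [map_mul, conj_ofReal, conj_I, map_ofNat]
    push_cast
    ring
  simp_rw [hexp]
  rw [← integral_map (f := fun x : ℝ => exp (2 * π * I * ((a - b : ℤ) : ℂ) * x)) hθ.aemeasurable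
    (by fun_prop), hθμ, integral_Icc_exp_two_pi_I_int_mul]
  simp [sub_eq_zero]

end UniformUnitCircle

end Circle

namespace IsSteinhaus

variable {Ω : Type*} [MeasurableSpace Ω] {μ : Measure Ω} {f : Ω → ℕ → ℂ}

theorem apply_eq_prod_of_subset (hf : IsSteinhaus μ f) (ω : Ω) {n : ℕ} {S : Finset ℕ}
    (hS : n.primeFactors ⊆ S) : f ω n = ∏ p ∈ S, f ω p ^ n.factorization p := by
  rw [hf.2.2 ω n]
  refine prod_subset hS fun p _ hp => ?_
  rw [Finsupp.notMem_support_iff.mp (by simpa using hp), pow_zero]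

theorem measurable_apply (hf : IsSteinhaus μ f) (n : ℕ) : Measurable fun ω => f ω n := by
  simp_rw [hf.2.2 _ n]
  exact Finset.measurable_prod _ fun p hp =>
    ((hf.2.1 ⟨p, Nat.prime_of_mem_primeFactors hp⟩).measurable.pow_const _)

theorem norm_apply (hf : IsSteinhaus μ f) (ω : Ω) (n : ℕ) : ‖f ω n‖ = 1 := by
  rw [hf.2.2 ω n, norm_prod]
  exact prod_eq_one fun p hp => by
    rw [norm_pow, (hf.2.1 ⟨p, Nat.prime_of_mem_primeFactors hp⟩).norm_eq_one, one_pow]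

theorem apply_mul (hf : IsSteinhaus μ f) (ω : Ω) {m n : ℕ} (hm : m ≠ 0) (hn : n ≠ 0) :
    f ω (m * n) = f ω m * f ω n := by
  rw [hf.apply_eq_prod_of_subset ω Subset.rfl,
    hf.apply_eq_prod_of_subset ω (Nat.primeFactors_mono (dvd_mul_right m n) (mul_ne_zero hm hn)),
    hf.apply_eq_prod_of_subset ω (Nat.primeFactors_mono (dvd_mul_left n m) (mul_ne_zero hm hn)),
    ← prod_mul_distrib]
  simp_rw [Nat.factorization_mul hm hn, Finsupp.add_apply, pow_add]

theorem apply_prod (hf : IsSteinhaus μ f) (ω : Ω) {ι : Type*} (s : Finset ι) {t : ι → ℕ}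
    (ht : ∀ i ∈ s, t i ≠ 0) : f ω (∏ i ∈ s, t i) = ∏ i ∈ s, f ω (t i) := by
  classical
  induction s using Finset.induction_on with
  | empty => simpa using hf.2.2 ω 1
  | insert a s ha ih =>
    rw [prod_insert ha, prod_insert ha, hf.apply_mul ω (ht a (by simp))
      (prod_ne_zero_iff.mpr fun i hi => ht i (by simp [hi])), ih fun i hi => ht i (by simp [hi])]

theorem integral_apply_mul_conj (hf : IsSteinhaus μ f) {m n : ℕ} (hm : m ≠ 0) (hn : n ≠ 0) :
    ∫ ω, f ω m * conj (f ω n) ∂μ = if m = n then 1 else 0 := by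
  set S := (m * n).primeFactors
  have hmS : m.primeFactors ⊆ S := Nat.primeFactors_mono (dvd_mul_right m n) (mul_ne_zero hm hn)
  have hnS : n.primeFactors ⊆ S := Nat.primeFactors_mono (dvd_mul_left n m) (mul_ne_zero hm hn)
  let ι : S → Nat.Primes := fun p => ⟨p, Nat.prime_of_mem_primeFactors p.2⟩
  have hι : ι.Injective := fun p p' h => Subtype.ext ((Nat.Primes.coe_nat_inj _ _).mpr h)
  have hprod (ω : Ω) : f ω m * conj (f ω n)
      = ∏ p : S, f ω (ι p) ^ m.factorization p * conj (f ω (ι p)) ^ n.factorization p := by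
    rw [hf.apply_eq_prod_of_subset ω hmS, hf.apply_eq_prod_of_subset ω hnS, map_prod,
      ← prod_mul_distrib, ← prod_coe_sort S]
    simp only [map_pow, ι]
  have := hf.1.isProbabilityMeasure
  simp_rw [hprod]
  rw [(hf.1.precomp hι).integral_fun_prod_comp
    (f := fun (p : S) (z : ℂ) => z ^ m.factorization p * conj z ^ n.factorization p)
    (fun p => (hf.measurable_apply _).aemeasurable) (fun p => by fun_prop)]
  simp_rw [fun p : S => (hf.2.1 (ι p)).integral_pow_mul_conj_pow]
  rw [Fintype.prod_boole]
  congr 1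
  refine propext ⟨fun h => Nat.eq_of_factorization_eq hm hn fun p => ?_, fun h _ => h ▸ rfl⟩
  by_cases hp : p ∈ S
  · exact h ⟨p, hp⟩
  · rw [Finsupp.notMem_support_iff.mp (by simpa using mt (@hmS p) hp),
      Finsupp.notMem_support_iff.mp (by simpa using mt (@hnS p) hp)]

theorem memLp_apply (hf : IsSteinhaus μ f) (n : ℕ) : MemLp (fun ω => f ω n) 2 μ :=
  have := hf.1.isProbabilityMeasure
  MemLp.of_bound (hf.measurable_apply n).aestronglyMeasurable 1
    (ae_of_all _ fun ω => (hf.norm_apply ω n).le)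

end IsSteinhaus

theorem steinhaus_hypercontractive_general {Ω : Type*} [MeasurableSpace Ω] (μ : Measure Ω)
    (f : Ω → ℕ → ℂ) (hf : IsSteinhaus μ f)
    (q : ℕ) (N : ℕ) (a : ℕ → ℂ) :
    ∫ ω, ‖∑ n ∈ Finset.Icc 1 N, a n * f ω n‖ ^ (2 * q) ∂μ ≤
      (∑ n ∈ Finset.Icc 1 N, ‖a n‖ ^ 2 * (dfold q n : ℝ)) ^ q := by
  set P := Fintype.piFinset fun _ : Fin q => Icc 1 N
  have hP {t} (ht : t ∈ P) (i : Fin q) : t i ≠ 0 :=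
    (Nat.one_le_iff_ne_zero.mp (mem_Icc.mp (Fintype.mem_piFinset.mp ht i)).1)
  have hprodP {t} (ht : t ∈ P) : ∏ i, t i ≠ 0 := prod_ne_zero_iff.mpr fun i _ => hP ht i
  have hnz : ∀ n ∈ P.image fun t => ∏ i, t i, n ≠ 0 := forall_mem_image.mpr fun t => hprodP
  have hexpand (ω : Ω) : (∑ n ∈ Icc 1 N, a n * f ω n) ^ q
      = ∑ t ∈ P, (∏ i, a (t i)) * f ω (∏ i, t i) := by
    rw [sum_pow']
    refine sum_congr rfl fun t ht => ?_
    rw [prod_mul_distrib, hf.apply_prod ω _ fun i _ => hP ht i]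
  calc ∫ ω, ‖∑ n ∈ Icc 1 N, a n * f ω n‖ ^ (2 * q) ∂μ
      = ∫ ω, ‖∑ t ∈ P, (∏ i, a (t i)) * f ω (∏ i, t i)‖ ^ 2 ∂μ := by
        simp_rw [mul_comm 2 q, pow_mul, ← norm_pow, hexpand]
    _ ≤ ∑ t ∈ P, #{u ∈ P | ∏ i, u i = ∏ i, t i} * ‖∏ i, a (t i)‖ ^ 2 :=
        integral_norm_sum_comp_sq_le hf.memLp_apply _
          (fun m hm n hn => hf.integral_apply_mul_conj (hnz m hm) (hnz n hn)) _
    _ ≤ ∑ t ∈ P, ∏ i, ‖a (t i)‖ ^ 2 * (dfold q (t i) : ℝ) := by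
        refine sum_le_sum fun t ht => ?_
        rw [prod_mul_distrib, norm_prod, ← prod_pow, mul_comm]
        gcongr
        exact_mod_cast (card_filter_prod_eq_le_dfold P (hprodP ht)).trans (dfold_prod_le q _ t)
    _ = (∑ n ∈ Icc 1 N, ‖a n‖ ^ 2 * (dfold q n : ℝ)) ^ q := by
        rw [sum_pow']

/-- Hypercontractive upper bound for Steinhaus random multiplicative
functions: `E[|Σ_{n ≤ N} aₙ f(n)|^{2q}] ≤ (Σ_{n ≤ N} |aₙ|² d_q(n))^q`. -/
theorem steinhaus_hypercontractive {Ω : Type*} [MeasurableSpace Ω] (μ : Measure Ω)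
    [IsProbabilityMeasure μ] (f : Ω → ℕ → ℂ)
    (hmeas : ∀ n, Measurable fun ω => f ω n) (hf : IsSteinhaus μ f)
    (q : ℕ) (N : ℕ) (a : ℕ → ℂ) :
    ∫ ω, ‖∑ n ∈ Finset.Icc 1 N, a n * f ω n‖ ^ (2 * q) ∂μ ≤
      (∑ n ∈ Finset.Icc 1 N, ‖a n‖ ^ 2 * (dfold q n : ℝ)) ^ q :=
  steinhaus_hypercontractive_general μ f hf q N a
end

section
/- For reals 0 ≤ t with t·log y ≤ 1 and 2 ≤ x ≤ y, the integral ∫_{log x}^{log y} cos(tu)/u du = log(log y/log x) + O(1); if t·log x ≤ 1 < t·log y then it equals log(1/(t log x)) + O(1); and if t·log x > 1 the integral is O(1). In all cases ∫_{log x}^{log y} cos(tu)/u du = log(1 + min{log y/log x, 1/(t log x)}) + O(1). -/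
/-!
For `tu ≤ 1` we have `cos (tu) = 1 + O((tu)²)`, so on `[a, min b (1/t)]` the integral is
`∫ du/u`, the log of the ratio of the endpoints, up to `O(1)`. The substitution `v = tu` turns the
remaining range into `∫ cos v / v` over `v ≥ 1`, and integrating by parts against `sin` bounds
that by `3`. The last estimate follows because `log (1 + m) = log m + O(1/m)`.
-/

open MeasureTheory Real Set

lemma Real.abs_cos_sub_one_le (x : ℝ) : |cos x - 1| ≤ x ^ 2 / 2 := by
  rw [abs_le]
  constructor
  · linarith [one_sub_sq_div_two_le_cos (x := x)]
  · linarith [cos_le_one x, sq_nonneg x]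

lemma Real.abs_log_one_add_sub_log_le {m : ℝ} (hm : 0 < m) :
    |log (1 + m) - log m| ≤ m⁻¹ := by
  have hq : (1 + m) / m = 1 + m⁻¹ := by field_simp; ring
  rw [← log_div (by positivity) hm.ne', hq, abs_of_nonneg (log_nonneg (by simp [hm.le]))]
  linarith [log_le_sub_one_of_pos (x := 1 + m⁻¹) (by positivity)]

lemma Real.log_one_add_le_self {m : ℝ} (hm : 0 ≤ m) : log (1 + m) ≤ m := by
  linarith [log_le_sub_one_of_pos (x := 1 + m) (by positivity)]

lemma abs_sub_log_one_add_le {X m c : ℝ} (hm : 1 ≤ m) (h : |X - log m| ≤ c) :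
    |X - log (1 + m)| ≤ c + 1 := by
  have hlog := abs_log_one_add_sub_log_le (m := m) (by linarith)
  have hinv : m⁻¹ ≤ 1 := inv_le_one_of_one_le₀ hm
  have := abs_sub_le X (log m) (log (1 + m))
  rw [abs_sub_comm (log m)] at this
  linarith

lemma intervalIntegrable_cos_mul_div {t a b : ℝ} (ha : 0 < a) (hab : a ≤ b) :
    IntervalIntegrable (fun u => cos (t * u) / u) volume a b := by
  refine ContinuousOn.intervalIntegrable <|
    (by fun_prop : Continuous fun u => cos (t * u)).continuousOn.div continuousOn_id fun u hu => ?_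
  rw [uIcc_of_le hab] at hu
  exact (ha.trans_le hu.1).ne'

lemma abs_integral_cos_mul_div_sub_log_le {t a b : ℝ} (ha : 0 < a) (hab : a ≤ b) :
    |(∫ u in a..b, cos (t * u) / u) - log (b / a)| ≤ (t * b) ^ 2 / 2 := by
  have h0 : (0 : ℝ) ∉ uIcc a b := by rw [uIcc_of_le hab]; exact fun h => ha.not_ge h.1
  have hinv : IntervalIntegrable (fun u : ℝ => u⁻¹) volume a b :=
    intervalIntegral.intervalIntegrable_inv (fun u hu => ne_of_mem_of_not_mem hu h0)
      continuousOn_id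
  rw [← integral_inv h0,
    ← intervalIntegral.integral_sub (intervalIntegrable_cos_mul_div ha hab) hinv]
  have hpt : ∀ u ∈ uIoc a b, ‖cos (t * u) / u - u⁻¹‖ ≤ t ^ 2 * b / 2 := by
    intro u hu
    rw [uIoc_of_le hab] at hu
    have hu0 : 0 < u := ha.trans hu.1
    calc ‖cos (t * u) / u - u⁻¹‖ = |cos (t * u) - 1| / u := by
          rw [Real.norm_eq_abs, ← abs_of_pos hu0, ← abs_div, abs_of_pos hu0, sub_div, one_div]
      _ ≤ (t * u) ^ 2 / 2 / u := by gcongr; exact abs_cos_sub_one_le _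
      _ = t ^ 2 * u / 2 := by field_simp
      _ ≤ t ^ 2 * b / 2 := by gcongr; exact hu.2
  calc ‖∫ u in a..b, (cos (t * u) / u - u⁻¹)‖
      ≤ t ^ 2 * b / 2 * |b - a| := intervalIntegral.norm_integral_le_of_norm_le_const hpt
    _ ≤ (t * b) ^ 2 / 2 := by
      rw [abs_of_nonneg (sub_nonneg.2 hab)]
      nlinarith [mul_nonneg (sq_nonneg t) (ha.trans_le hab).le]

lemma integral_cos_mul_div_eq {t : ℝ} (ht : t ≠ 0) (a b : ℝ) :
    ∫ u in a..b, cos (t * u) / u = ∫ v in t * a..t * b, cos v / v := by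
  have hscale : ∀ u : ℝ, cos (t * u) / u = t * (cos (t * u) / (t * u)) := fun u => by
    rw [← mul_div_assoc, mul_div_mul_left _ _ ht]
  simp_rw [hscale, intervalIntegral.integral_const_mul]
  exact intervalIntegral.smul_integral_comp_mul_left (fun v => cos v / v) t

lemma abs_integral_cos_div_le {A B : ℝ} (hA : 0 < A) (hAB : A ≤ B) :
    |∫ v in A..B, cos v / v| ≤ 3 / A := by
  have hpos : ∀ x ∈ uIcc A B, 0 < x := fun x hx => by
    rw [uIcc_of_le hAB] at hx; exact hA.trans_le hx.1
  have hcont_inv_sq : ContinuousOn (fun x : ℝ => (x ^ 2)⁻¹) (uIcc A B) :=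
    (continuousOn_pow 2).inv₀ fun x hx => pow_ne_zero 2 (hpos x hx).ne'
  have hibp := intervalIntegral.integral_mul_deriv_eq_deriv_mul
    (fun x hx => hasDerivAt_inv (hpos x hx).ne') (fun x _ => hasDerivAt_sin x)
    hcont_inv_sq.neg.intervalIntegrable (continuous_cos.intervalIntegrable A B)
  have hFTC : ∫ x in A..B, (x ^ 2)⁻¹ = A⁻¹ - B⁻¹ := by
    rw [intervalIntegral.integral_eq_sub_of_hasDerivAt
      (f := fun x => -x⁻¹) (fun x hx => by simpa using (hasDerivAt_inv (hpos x hx).ne').fun_neg)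
      hcont_inv_sq.intervalIntegrable]
    ring
  have htail : |∫ x in A..B, -(x ^ 2)⁻¹ * sin x| ≤ A⁻¹ := by
    refine (intervalIntegral.norm_integral_le_of_norm_le (f := fun x => -(x ^ 2)⁻¹ * sin x)
      (μ := volume) hAB (.of_forall fun x _ => ?_) hcont_inv_sq.intervalIntegrable).trans ?_
    · simpa using mul_le_of_le_one_right (inv_nonneg.2 (sq_nonneg x)) (abs_sin_le_one x)
    · rw [hFTC]; linarith [inv_pos.2 (hA.trans_le hAB)]
  have hboundary : ∀ x, 0 < x → A ≤ x → |x⁻¹ * sin x| ≤ A⁻¹ := fun x hx hAx => by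
    rw [abs_mul, abs_of_pos (inv_pos.2 hx)]
    calc x⁻¹ * |sin x| ≤ x⁻¹ * 1 := by gcongr; exact abs_sin_le_one x
      _ ≤ A⁻¹ := by rw [mul_one]; exact inv_anti₀ hA hAx
  simp_rw [div_eq_inv_mul]
  rw [hibp]
  have hB := hboundary B (hA.trans_le hAB) hAB
  have hA' := hboundary A hA le_rfl
  calc _ ≤ |B⁻¹ * sin B| + |A⁻¹ * sin A| + |∫ x in A..B, -(x ^ 2)⁻¹ * sin x| :=
        (abs_sub _ _).trans (by gcongr; exact abs_sub _ _)
    _ ≤ A⁻¹ * 3 := by linarith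

lemma abs_integral_cos_div_sub_log_le {A B : ℝ} (hA : 0 < A) (hA1 : A ≤ 1) (hB : 1 ≤ B) :
    |(∫ v in A..B, cos v / v) - log (1 / A)| ≤ 7 / 2 := by
  have hnear := abs_integral_cos_mul_div_sub_log_le (t := 1) hA hA1
  have hfar := abs_integral_cos_div_le zero_lt_one hB
  simp only [one_mul] at hnear
  rw [← intervalIntegral.integral_add_adjacent_intervals
    (by simpa using intervalIntegrable_cos_mul_div (t := 1) hA hA1)
    (by simpa using intervalIntegrable_cos_mul_div (t := 1) zero_lt_one hB)]
  calc |(∫ v in A..1, cos v / v) + (∫ v in (1 : ℝ)..B, cos v / v) - log (1 / A)|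
      = |((∫ v in A..1, cos v / v) - log (1 / A)) + ∫ v in (1 : ℝ)..B, cos v / v| := by
        congr 1; ring
    _ ≤ 1 ^ 2 / 2 + 3 / 1 := (abs_add_le _ _).trans (add_le_add hnear hfar)
    _ = 7 / 2 := by norm_num

lemma abs_integral_cos_mul_div_le {t a b : ℝ} (ha : 0 < a) (hab : a ≤ b) (hta : 1 ≤ t * a) :
    |∫ u in a..b, cos (t * u) / u| ≤ 3 := by
  have ht : 0 < t := by nlinarith
  rw [integral_cos_mul_div_eq ht.ne']
  calc _ ≤ 3 / (t * a) := abs_integral_cos_div_le (by linarith) (by gcongr)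
    _ ≤ 3 := div_le_self (by norm_num) hta

lemma abs_integral_cos_mul_div_sub_log_inv_le {t a b : ℝ} (ha : 0 < a) (hab : a ≤ b)
    (hta : t * a ≤ 1) (htb : 1 < t * b) :
    |(∫ u in a..b, cos (t * u) / u) - log (1 / (t * a))| ≤ 7 / 2 := by
  have ht : 0 < t := by nlinarith
  rw [integral_cos_mul_div_eq ht.ne']
  exact abs_integral_cos_div_sub_log_le (by positivity) hta htb.le

lemma abs_integral_cos_mul_div_sub_log_one_add_min_le {t a b : ℝ} (ha : 0 < a) (hab : a ≤ b)
    (ht : 0 < t) :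
    |(∫ u in a..b, cos (t * u) / u) - log (1 + min (b / a) (1 / (t * a)))| ≤ 9 / 2 := by
  have hb : 0 < b := ha.trans_le hab
  rcases le_or_gt (t * b) 1 with htb | htb
  · rw [min_eq_left (by rw [div_le_div_iff₀ ha (by positivity)]; nlinarith)]
    have hsmall := (abs_integral_cos_mul_div_sub_log_le (t := t) ha hab).trans
      (show (t * b) ^ 2 / 2 ≤ 7 / 2 by nlinarith [mul_pos ht hb])
    exact (abs_sub_log_one_add_le ((one_le_div ha).2 hab) hsmall).trans_eq (by norm_num)
  rw [min_eq_right (by rw [div_le_div_iff₀ (by positivity) ha]; nlinarith)]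
  rcases le_or_gt (t * a) 1 with hta | hta
  · exact (abs_sub_log_one_add_le ((one_le_div (by positivity)).2 hta)
      (abs_integral_cos_mul_div_sub_log_inv_le ha hab hta htb)).trans_eq (by norm_num)
  · have hm : 1 / (t * a) ≤ 1 := (div_le_one (by positivity)).2 hta.le
    have hlog := log_one_add_le_self (m := 1 / (t * a)) (by positivity)
    have hlog_nonneg := log_nonneg (x := 1 + 1 / (t * a)) (by simp; positivity)
    have hfar := abs_integral_cos_mul_div_le ha hab hta.le
    calc _ ≤ |∫ u in a..b, cos (t * u) / u| + |log (1 + 1 / (t * a))| := abs_sub _ _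
      _ ≤ 9 / 2 := by rw [abs_of_nonneg hlog_nonneg]; linarith

/-- Estimates for `∫_{log x}^{log y} cos(tu)/u du` with `2 ≤ x ≤ y` and
`t ≥ 0`: if `t log y ≤ 1` it equals `log(log y/log x) + O(1)`; if `t log x ≤ 1 < t log y`
it equals `log(1/(t log x)) + O(1)`; if `t log x > 1` it is `O(1)`; and in all cases
(for `t > 0`) it equals `log(1 + min{log y/log x, 1/(t log x)}) + O(1)`. -/
theorem cos_integral_estimates :
    ∃ C : ℝ, 0 < C ∧
      ∀ t x y : ℝ, 0 ≤ t → 2 ≤ x → x ≤ y →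
        (t * Real.log y ≤ 1 →
          |(∫ u in Set.Icc (Real.log x) (Real.log y), Real.cos (t * u) / u) -
              Real.log (Real.log y / Real.log x)| ≤ C) ∧
        (t * Real.log x ≤ 1 → 1 < t * Real.log y →
          |(∫ u in Set.Icc (Real.log x) (Real.log y), Real.cos (t * u) / u) -
              Real.log (1 / (t * Real.log x))| ≤ C) ∧
        (1 < t * Real.log x →
          |∫ u in Set.Icc (Real.log x) (Real.log y), Real.cos (t * u) / u| ≤ C) ∧
        (0 < t →
          |(∫ u in Set.Icc (Real.log x) (Real.log y), Real.cos (t * u) / u) -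
              Real.log (1 + min (Real.log y / Real.log x) (1 / (t * Real.log x)))| ≤ C) := by
  refine ⟨9 / 2, by norm_num, fun t x y ht hx hxy => ?_⟩
  have ha : 0 < log x := log_pos (by linarith)
  have hab : log x ≤ log y := log_le_log (by linarith) hxy
  rw [integral_Icc_eq_integral_Ioc, ← intervalIntegral.integral_of_le hab]
  refine ⟨fun htb => ?_, fun hta htb => ?_, fun hta => ?_,
    abs_integral_cos_mul_div_sub_log_one_add_min_le ha hab⟩
  · exact (abs_integral_cos_mul_div_sub_log_le ha hab).trans
      (by nlinarith [mul_nonneg ht (ha.trans_le hab).le])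
  · exact (abs_integral_cos_mul_div_sub_log_inv_le ha hab hta htb).trans (by norm_num)
  · exact (abs_integral_cos_mul_div_le ha hab hta.le).trans (by norm_num)
end

section
/- Let q ≥ 1 be an integer and x ≥ 3 real, with q ≤ c·log x/log log x for a sufficiently small absolute constant c. Then Σ_{n≤x, p|n ⇒ p>q²} d_q(n) ≤ x·e^{O(q)}·Π_{p>q²}(1 − p^{−1−q/log x})^{−q}. -/
open scoped Classical

private lemma hasProd_pow' {ι : Type*} {f : ι → ℝ} {a : ℝ} (h : HasProd f a) (n : ℕ) :
    HasProd (fun i => f i ^ n) (a ^ n) := by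
  induction n with
  | zero => simpa using hasProd_one
  | succ n ih => simpa [pow_succ] using ih.mul h

/-- The completely multiplicative function `n ↦ n^{-σ}` restricted to `n` with all prime
factors `> q²`. -/
noncomputable def rf (q : ℕ) (σ : ℝ) (hσ : 0 < σ) : ℕ →*₀ ℝ where
  toFun m := if ∀ p : ℕ, p.Prime → p ∣ m → ((q : ℝ)) ^ 2 < (p : ℝ) then (m : ℝ) ^ (-σ) else 0
  map_zero' := by
    split_ifs
    · simp [Real.zero_rpow (by linarith : -σ ≠ 0)]
    · rfl
  map_one' := by
    rw [if_pos, Nat.cast_one, Real.one_rpow]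
    intro p hp hd
    exact absurd (Nat.dvd_one.mp hd) hp.one_lt.ne'
  map_mul' a b := by
    by_cases ha : ∀ p : ℕ, p.Prime → p ∣ a → ((q : ℝ)) ^ 2 < (p : ℝ)
    · by_cases hb : ∀ p : ℕ, p.Prime → p ∣ b → ((q : ℝ)) ^ 2 < (p : ℝ)
      · have hab : ∀ p : ℕ, p.Prime → p ∣ a * b → ((q : ℝ)) ^ 2 < (p : ℝ) := by
          intro p hp hd
          rcases (Nat.Prime.dvd_mul hp).mp hd with h | h
          · exact ha p hp h
          · exact hb p hp h
        simp only [if_pos ha, if_pos hb, if_pos hab, Nat.cast_mul]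
        exact Real.mul_rpow (by positivity) (by positivity)
      · have hab : ¬ ∀ p : ℕ, p.Prime → p ∣ a * b → ((q : ℝ)) ^ 2 < (p : ℝ) :=
          fun h => hb fun p hp hd => h p hp (hd.mul_left a)
        simp [if_neg hb, if_neg hab]
    · have hab : ¬ ∀ p : ℕ, p.Prime → p ∣ a * b → ((q : ℝ)) ^ 2 < (p : ℝ) :=
        fun h => ha fun p hp hd => h p hp (hd.mul_right b)
      simp [if_neg ha, if_neg hab]

/-- Rankin's trick bound. For integer `q ≥ 1` and `x` with
`q ≤ c log x / log log x`, the sum of `d_q(n)` over `n ≤ x` all of whose prime factors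
exceed `q²` is at most `x · e^{O(q)} · Π_{p > q²} (1 - p^{-1-q/log x})^{-q}`. -/
theorem rankin_divisor_bound :
    ∃ C c : ℝ, 0 < C ∧ 0 < c ∧
      ∀ (q : ℕ) (x : ℝ), 1 ≤ q → 3 ≤ x →
        (q : ℝ) ≤ c * Real.log x / Real.log (Real.log x) →
        ∑ n ∈ (Finset.Icc 1 ⌊x⌋₊).filter
            (fun n : ℕ => ∀ p : ℕ, p.Prime → p ∣ n → ((q : ℝ)) ^ 2 < (p : ℝ)),
          (dfold q n : ℝ) ≤
          x * Real.exp (C * q) *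
            ∏' p : Nat.Primes,
              (if ((q : ℝ)) ^ 2 < ((p : ℕ) : ℝ) then
                ((1 - ((p : ℕ) : ℝ) ^ (-(1 + (q : ℝ) / Real.log x)))⁻¹) ^ (q : ℕ)
              else 1) := by
  refine ⟨1, 1, one_pos, one_pos, fun q x hq hx _ => ?_⟩
  have hx1 : (1 : ℝ) < x := by linarith
  have hx0 : (0 : ℝ) < x := by linarith
  have hlog : 0 < Real.log x := Real.log_pos hx1
  set σ : ℝ := 1 + (q : ℝ) / Real.log x with hσdef
  have hq0 : (0 : ℝ) < q := by exact_mod_cast hq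
  have hσ1 : 1 < σ := by
    rw [hσdef]
    have : 0 < (q : ℝ) / Real.log x := div_pos hq0 hlog
    linarith
  have hσ0 : 0 < σ := by linarith
  set f := rf q σ hσ0 with hfdef
  have hf_apply : ∀ m : ℕ,
      f m = if ∀ p : ℕ, p.Prime → p ∣ m → ((q : ℝ)) ^ 2 < (p : ℝ)
            then (m : ℝ) ^ (-σ) else 0 := fun m => rfl
  have hf_nonneg : ∀ m : ℕ, 0 ≤ f m := by
    intro m
    rw [hf_apply]
    split_ifs
    · positivity
    · exact le_rfl

  -- Summability
  have hfsummable : Summable (fun n : ℕ => ‖f n‖) := by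
    have h1 : Summable (fun n : ℕ => (n : ℝ) ^ (-σ)) :=
      Real.summable_nat_rpow.mpr (by linarith)
    refine Summable.of_nonneg_of_le (fun n => norm_nonneg _) (fun n => ?_) h1
    rw [Real.norm_of_nonneg (hf_nonneg n), hf_apply]
    split_ifs
    · exact le_rfl
    · positivity
  have hfsummable' : Summable (fun n : ℕ => f n) := hfsummable.of_norm
  have hEuler : HasProd (fun p : Nat.Primes => (1 - f p)⁻¹) (∑' n, f n) :=
    EulerProduct.eulerProduct_completely_multiplicative_hasProd hfsummable
  have hPow : HasProd (fun p : Nat.Primes => ((1 - f (p : ℕ))⁻¹) ^ q) ((∑' n, f n) ^ q) :=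
    hasProd_pow' hEuler q
  have hprod_eq : (∏' p : Nat.Primes,
      (if ((q : ℝ)) ^ 2 < ((p : ℕ) : ℝ) then
        ((1 - ((p : ℕ) : ℝ) ^ (-(1 + (q : ℝ) / Real.log x)))⁻¹) ^ (q : ℕ)
      else 1)) = (∑' n, f n) ^ q := by
    rw [← hPow.tprod_eq]
    apply tprod_congr
    intro p
    by_cases hp : ((q : ℝ)) ^ 2 < ((p : ℕ) : ℝ)
    · rw [if_pos hp]
      have : f (p : ℕ) = ((p : ℕ) : ℝ) ^ (-σ) := by
        rw [hf_apply, if_pos]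
        intro r hr hd
        rwa [(Nat.prime_dvd_prime_iff_eq hr p.prop).mp hd]
      rw [this, hσdef]
    · rw [if_neg hp]
      have : f (p : ℕ) = 0 := by
        rw [hf_apply, if_neg]
        exact fun h => hp (h p p.prop dvd_rfl)
      rw [this, sub_zero, inv_one, one_pow]
  -- Notation
  set N : ℕ := ⌊x⌋₊ with hN
  set S : Finset ℕ := (Finset.Icc 1 N).filter
      (fun n : ℕ => ∀ p : ℕ, p.Prime → p ∣ n → ((q : ℝ)) ^ 2 < (p : ℝ)) with hS
  have hNx : (N : ℝ) ≤ x := Nat.floor_le hx0.le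
  -- Step A: Rankin's trick
  have stepA : ∑ n ∈ S, (dfold q n : ℝ) ≤ x ^ σ * ∑ n ∈ S, (n : ℝ) ^ (-σ) * dfold q n := by
    rw [Finset.mul_sum]
    apply Finset.sum_le_sum
    intro n hn
    obtain ⟨hn1, hnN⟩ := Finset.mem_Icc.mp (Finset.mem_filter.mp hn).1
    have hn1' : (1 : ℝ) ≤ (n : ℝ) := by exact_mod_cast hn1
    have hnx : (n : ℝ) ≤ x := le_trans (by exact_mod_cast hnN) hNx
    have key : (1 : ℝ) ≤ x ^ σ * (n : ℝ) ^ (-σ) := by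
      have hxn : (1 : ℝ) ≤ x / n := (one_le_div (by linarith)).mpr hnx
      calc (1 : ℝ) = 1 ^ σ := (Real.one_rpow σ).symm
        _ ≤ (x / n) ^ σ := Real.rpow_le_rpow zero_le_one hxn hσ0.le
        _ = x ^ σ * (n : ℝ) ^ (-σ) := by
            rw [Real.div_rpow hx0.le (by linarith), Real.rpow_neg (by linarith),
              div_eq_mul_inv]
    calc (dfold q n : ℝ) = 1 * dfold q n := (one_mul _).symm
      _ ≤ x ^ σ * (n : ℝ) ^ (-σ) * dfold q n :=
          mul_le_mul_of_nonneg_right key (Nat.cast_nonneg _)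
      _ = x ^ σ * ((n : ℝ) ^ (-σ) * dfold q n) := mul_assoc _ _ _
  -- Step B
  have stepB : ∑ n ∈ S, (n : ℝ) ^ (-σ) * dfold q n ≤ (∑ m ∈ Finset.Icc 1 N, f m) ^ q := by
    set B : Finset (Fin q → ℕ) := (Fintype.piFinset fun _ : Fin q => Finset.Icc 1 N).filter
        (fun t => ∏ i, t i ∈ S) with hB
    have hfiber : ∀ n ∈ S, (n : ℝ) ^ (-σ) * dfold q n
        = ∑ t ∈ B.filter (fun t => ∏ i, t i = n), ∏ i, f (t i) := by
      intro n hn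
      obtain ⟨hmem, hres⟩ := Finset.mem_filter.mp hn
      obtain ⟨hn1, hnN⟩ := Finset.mem_Icc.mp hmem
      have hBn : B.filter (fun t => ∏ i, t i = n)
          = ((Fintype.piFinset fun _ : Fin q => Finset.Icc 1 n).filter
              fun t => ∏ i, t i = n) := by
        ext t
        constructor
        · intro ht
          have h1 := Finset.mem_filter.mp ht
          have h2 := Finset.mem_filter.mp h1.1
          refine Finset.mem_filter.mpr ⟨Fintype.mem_piFinset.mpr fun i => ?_, h1.2⟩
          have hi := Fintype.mem_piFinset.mp h2.1 i
          rw [Finset.mem_Icc] at hi ⊢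
          have hdvd : t i ∣ n := h1.2 ▸ Finset.dvd_prod_of_mem t (Finset.mem_univ i)
          exact ⟨hi.1, Nat.le_of_dvd (by omega) hdvd⟩
        · intro ht
          have h1 := Finset.mem_filter.mp ht
          refine Finset.mem_filter.mpr
            ⟨Finset.mem_filter.mpr ⟨Fintype.mem_piFinset.mpr fun i => ?_,
              by rw [h1.2]; exact hn⟩, h1.2⟩
          have hi := Fintype.mem_piFinset.mp h1.1 i
          rw [Finset.mem_Icc] at hi ⊢
          exact ⟨hi.1, hi.2.trans hnN⟩
      have hval : ∀ t ∈ B.filter (fun t => ∏ i, t i = n), (∏ i, f (t i)) = (n : ℝ) ^ (-σ) := by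
        intro t ht
        rw [hBn] at ht
        obtain ⟨hpi, hprod⟩ := Finset.mem_filter.mp ht
        have hres' : ∀ i : Fin q, f (t i) = ((t i : ℕ) : ℝ) ^ (-σ) := by
          intro i
          rw [hf_apply, if_pos]
          intro r hr hd
          have : t i ∣ n := hprod ▸ Finset.dvd_prod_of_mem t (Finset.mem_univ i)
          exact hres r hr (hd.trans this)
        calc (∏ i, f (t i)) = ∏ i, ((t i : ℕ) : ℝ) ^ (-σ) :=
              Finset.prod_congr rfl (fun i _ => hres' i)
          _ = (∏ i, ((t i : ℕ) : ℝ)) ^ (-σ) :=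
              Real.finset_prod_rpow Finset.univ _ (fun i _ => Nat.cast_nonneg _) (-σ)
          _ = (n : ℝ) ^ (-σ) := by rw [← Nat.cast_prod, hprod]
      rw [Finset.sum_congr rfl hval, Finset.sum_const, nsmul_eq_mul]
      have hcard : (B.filter (fun t => ∏ i, t i = n)).card = dfold q n := by
        rw [hBn]; rfl
      rw [hcard, mul_comm]
    calc ∑ n ∈ S, (n : ℝ) ^ (-σ) * dfold q n
        = ∑ n ∈ S, ∑ t ∈ B.filter (fun t => ∏ i, t i = n), ∏ i, f (t i) :=
          Finset.sum_congr rfl hfiber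
      _ = ∑ t ∈ B, ∏ i, f (t i) :=
          Finset.sum_fiberwise_of_maps_to (fun t ht => (Finset.mem_filter.mp ht).2) _
      _ ≤ ∑ t ∈ Fintype.piFinset (fun _ : Fin q => Finset.Icc 1 N), ∏ i, f (t i) :=
          Finset.sum_le_sum_of_subset_of_nonneg (Finset.filter_subset _ _)
            (fun t _ _ => Finset.prod_nonneg fun i _ => hf_nonneg _)
      _ = ∏ _i : Fin q, ∑ m ∈ Finset.Icc 1 N, f m := (Finset.prod_univ_sum _ _).symm
      _ = (∑ m ∈ Finset.Icc 1 N, f m) ^ q := by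
          rw [Finset.prod_const, Finset.card_univ, Fintype.card_fin]
  -- Step C
  have stepC : (∑ m ∈ Finset.Icc 1 N, f m) ^ q ≤ (∑' n, f n) ^ q := by
    apply pow_le_pow_left₀ (Finset.sum_nonneg fun m _ => hf_nonneg m)
    exact Summable.sum_le_tsum (Finset.Icc 1 N) (fun m _ => hf_nonneg m) hfsummable'
  -- Step D: x^σ = x * e^q
  have stepD : x ^ σ = x * Real.exp ((1 : ℝ) * q) := by
    rw [hσdef, Real.rpow_add hx0, Real.rpow_one, Real.rpow_def_of_pos hx0,
      mul_div_cancel₀ _ hlog.ne', one_mul]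
  calc ∑ n ∈ S, (dfold q n : ℝ)
      ≤ x ^ σ * ∑ n ∈ S, (n : ℝ) ^ (-σ) * dfold q n := stepA
    _ ≤ x ^ σ * (∑' n, f n) ^ q :=
        mul_le_mul_of_nonneg_left (stepB.trans stepC) (Real.rpow_nonneg hx0.le σ)
    _ = x * Real.exp ((1 : ℝ) * q) * ∏' p : Nat.Primes,
          (if ((q : ℝ)) ^ 2 < ((p : ℕ) : ℝ) then
            ((1 - ((p : ℕ) : ℝ) ^ (-(1 + (q : ℝ) / Real.log x)))⁻¹) ^ (q : ℕ)
          else 1) := by rw [stepD, hprod_eq]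
end

section
/- For real q with 1 ≤ q < 2 and x ≥ 16, Σ_{|n| ≤ X} (X/(1+|n|))^{q(q−1)} ≪ X^{max{1, q(q−1)}} · min{log X, 1/|q − q₀|}, where X ≥ 2 and q₀ = (1+√5)/2 is the golden ratio (the unique q > 1 with q(q−1) = 1). -/
/-!
Writing `a = q(q-1) ∈ [0, 2)`, the sum is at most `2 X^a Σ_{k ≤ X} (k+1)^{-a}`. Bounding
`(k+1)^{-a} ≤ M^{max(0, 1-a)} (k+1)^{-1}` with `M = ⌊X⌋ + 1` gives the factor `log X` for
every `a`; comparing with `∫ x^{-a}` gives the factor `1/|1 - a|` for `a ≠ 1`. In both cases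
`X^a M^{max(0, 1-a)} ≪ X^{max(1, a)}`, and `|1 - q(q-1)| = |q - φ| |q - ψ| ≥ |q - φ|`
for `q ≥ 1`.
-/

open Finset Real
open scoped goldenRatio

theorem sum_Icc_natAbs_le_two_mul_sum_range {f : ℕ → ℝ} (hf : ∀ k, 0 ≤ f k) (N : ℕ) :
    ∑ n ∈ Icc (-(N : ℤ)) N, f n.natAbs ≤ 2 * ∑ k ∈ range (N + 1), f k := by
  have hmaps : ∀ n ∈ Icc (-(N : ℤ)) N, n.natAbs ∈ range (N + 1) := by
    intro n hn
    rw [mem_Icc] at hn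
    rw [mem_range]
    omega
  rw [← sum_fiberwise_of_maps_to hmaps, mul_sum]
  refine sum_le_sum fun k _ => ?_
  have hfiber : {n ∈ Icc (-(N : ℤ)) N | n.natAbs = k} ⊆ {(k : ℤ), -(k : ℤ)} := by
    intro n hn
    simp only [mem_filter] at hn
    simp only [mem_insert, mem_singleton]
    omega
  calc ∑ n ∈ Icc (-(N : ℤ)) N with n.natAbs = k, f n.natAbs
      = #{n ∈ Icc (-(N : ℤ)) N | n.natAbs = k} * f k := by
        rw [sum_congr rfl fun n hn => by rw [(mem_filter.mp hn).2], sum_const, nsmul_eq_mul]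
    _ ≤ 2 * f k := by
        gcongr
        · exact hf k
        · exact_mod_cast (card_le_card hfiber).trans card_le_two

theorem sum_range_rpow_neg_le_mul_one_add_log (a : ℝ) (M : ℕ) :
    ∑ k ∈ range M, ((k : ℝ) + 1) ^ (-a) ≤ (M : ℝ) ^ max 0 (1 - a) * (1 + log M) := by
  have hterm : ∀ k ∈ range M,
      ((k : ℝ) + 1) ^ (-a) ≤ (M : ℝ) ^ max 0 (1 - a) * ((k : ℝ) + 1)⁻¹ := by
    intro k hk
    have hkM : (k : ℝ) + 1 ≤ M := by exact_mod_cast mem_range.mp hk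
    calc ((k : ℝ) + 1) ^ (-a) = ((k : ℝ) + 1) ^ (1 - a) * ((k : ℝ) + 1)⁻¹ := by
          rw [← rpow_neg_one, ← rpow_add k.cast_add_one_pos]; ring_nf
      _ ≤ ((k : ℝ) + 1) ^ max 0 (1 - a) * ((k : ℝ) + 1)⁻¹ := by
          gcongr
          · simp
          · exact le_max_right _ _
      _ ≤ (M : ℝ) ^ max 0 (1 - a) * ((k : ℝ) + 1)⁻¹ := by
          gcongr
  have hharmonic : ∑ k ∈ range M, ((k : ℝ) + 1)⁻¹ = harmonic M := by
    simp [harmonic]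
  calc _ ≤ ∑ k ∈ range M, (M : ℝ) ^ max 0 (1 - a) * ((k : ℝ) + 1)⁻¹ := sum_le_sum hterm
    _ ≤ _ := by
      rw [← mul_sum, hharmonic]
      gcongr
      exact harmonic_le_one_add_log M

theorem sum_range_rpow_neg_le_one_add_integral {a : ℝ} (ha0 : 0 ≤ a) (ha1 : a ≠ 1) {M : ℕ}
    (hM : 1 ≤ M) :
    ∑ k ∈ range M, ((k : ℝ) + 1) ^ (-a) ≤ 1 + ((M : ℝ) ^ (1 - a) - 1) / (1 - a) := by
  have hanti : AntitoneOn (fun x : ℝ => x ^ (-a)) (Set.Icc (1 : ℕ) M) :=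
    (antitoneOn_rpow_Ioi_of_exponent_nonpos (neg_nonpos.mpr ha0)).mono
      fun x hx => zero_lt_one.trans_le (by simpa using hx.1)
  have htail := hanti.sum_le_integral_Ico hM
  have hint : ∫ x in (1 : ℕ)..(M : ℝ), x ^ (-a) = ((M : ℝ) ^ (1 - a) - 1) / (1 - a) := by
    rw [integral_rpow (Or.inr ⟨fun h => ha1 (by linarith), ?_⟩)]
    · simp [sub_eq_neg_add]
    · rw [Set.mem_uIcc]
      push_cast
      intro h
      rcases h with ⟨h, _⟩ | ⟨_, h⟩ <;> linarith [(Nat.one_le_cast (α := ℝ)).mpr hM]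
  rw [range_eq_Ico, sum_eq_sum_Ico_succ_bot hM]
  push_cast at htail ⊢
  simp only [zero_add, one_rpow]
  linarith

theorem sum_range_rpow_neg_le_mul_div {a : ℝ} (ha0 : 0 ≤ a) (ha1 : a ≠ 1) {M : ℕ}
    (hM : 1 ≤ M) :
    ∑ k ∈ range M, ((k : ℝ) + 1) ^ (-a) ≤
      (M : ℝ) ^ max 0 (1 - a) * (max 1 a / |1 - a|) := by
  refine (sum_range_rpow_neg_le_one_add_integral ha0 ha1 hM).trans ?_
  rcases ha1.lt_or_gt with hlt | hgt
  · have hc : 0 < 1 - a := by linarith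
    have hMc : 1 ≤ (M : ℝ) ^ (1 - a) := one_le_rpow (by exact_mod_cast hM) hc.le
    rw [max_eq_right hc.le, max_eq_left hlt.le, abs_of_pos hc, mul_one_div, le_div_iff₀ hc,
      add_mul, div_mul_cancel₀ _ hc.ne']
    linarith
  · have hc : 1 - a < 0 := by linarith
    have hMc : 0 ≤ (M : ℝ) ^ (1 - a) := by positivity
    rw [max_eq_left hc.le, max_eq_right hgt.le, abs_of_neg hc, rpow_zero, one_mul,
      le_div_iff₀ (neg_pos.mpr hc), mul_neg, add_mul, div_mul_cancel₀ _ hc.ne]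
    linarith

theorem rpow_mul_rpow_max_le {X M a : ℝ} (hX : 0 < X) (hM : 0 ≤ M) (hMX : M ≤ 2 * X)
    (ha : 0 ≤ a) : X ^ a * M ^ max 0 (1 - a) ≤ 2 * X ^ max 1 a := by
  have hexp : a + max 0 (1 - a) = max 1 a := by
    rw [← max_add_add_left, add_zero, add_sub_cancel, max_comm]
  have hc1 : max 0 (1 - a) ≤ 1 := max_le zero_le_one (by linarith)
  calc X ^ a * M ^ max 0 (1 - a) ≤ X ^ a * (2 ^ max 0 (1 - a) * X ^ max 0 (1 - a)) := by
        rw [← mul_rpow zero_le_two hX.le]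
        gcongr
    _ ≤ X ^ a * (2 * X ^ max 0 (1 - a)) := by
        gcongr
        exact rpow_le_self_of_one_le one_le_two hc1
    _ = 2 * X ^ max 1 a := by rw [← hexp, rpow_add hX]; ring

theorem sum_Icc_floor_div_rpow_le {X : ℝ} (hX : 0 ≤ X) (a : ℝ) :
    ∑ n ∈ Icc (-⌊X⌋) ⌊X⌋, (X / (1 + |(n : ℝ)|)) ^ a ≤
      2 * X ^ a * ∑ k ∈ range (⌊X⌋₊ + 1), ((k : ℝ) + 1) ^ (-a) := by
  have hterm : ∀ n : ℤ,
      (X / (1 + |(n : ℝ)|)) ^ a = X ^ a * ((n.natAbs : ℝ) + 1) ^ (-a) := by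
    intro n
    rw [Nat.cast_natAbs, Int.cast_abs, div_rpow hX (by positivity), rpow_neg (by positivity),
      div_eq_mul_inv, add_comm]
  simp_rw [← Int.natCast_floor_eq_floor hX, hterm, ← mul_sum]
  rw [mul_comm 2, mul_assoc]
  gcongr
  exact sum_Icc_natAbs_le_two_mul_sum_range (fun k => rpow_nonneg k.cast_add_one_pos.le _) _

theorem natCast_floor_add_one_le_two_mul {X : ℝ} (hX : 1 ≤ X) :
    ((⌊X⌋₊ + 1 : ℕ) : ℝ) ≤ 2 * X := by
  push_cast
  linarith [Nat.floor_le (zero_le_one.trans hX)]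

theorem one_add_log_le_mul_log {X M : ℝ} (hX : 2 ≤ X) (hM : 0 < M) (hMX : M ≤ 2 * X) :
    1 + log M ≤ 7 / 2 * log X := by
  have hlog2 : 2 / 3 < log 2 := lt_trans (by norm_num) log_two_gt_d9
  have hlog2X : log 2 ≤ log X := log_le_log two_pos hX
  have hlogM : log M ≤ log 2 + log X := by
    rw [← log_mul two_ne_zero (by linarith)]
    exact log_le_log hM hMX
  linarith

theorem sum_Icc_floor_div_rpow_le_mul_log {X a : ℝ} (hX : 2 ≤ X) (ha : 0 ≤ a) :
    ∑ n ∈ Icc (-⌊X⌋) ⌊X⌋, (X / (1 + |(n : ℝ)|)) ^ a ≤ 14 * X ^ max 1 a * log X := by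
  have hMX := natCast_floor_add_one_le_two_mul (one_le_two.trans hX)
  calc _ ≤ 2 * X ^ a * ∑ k ∈ range (⌊X⌋₊ + 1), ((k : ℝ) + 1) ^ (-a) :=
        sum_Icc_floor_div_rpow_le (by linarith) a
    _ ≤ 2 * X ^ a *
          (((⌊X⌋₊ + 1 : ℕ) : ℝ) ^ max 0 (1 - a) * (1 + log (⌊X⌋₊ + 1 : ℕ))) := by
        gcongr
        exact sum_range_rpow_neg_le_mul_one_add_log a _
    _ = 2 * (X ^ a * ((⌊X⌋₊ + 1 : ℕ) : ℝ) ^ max 0 (1 - a)) *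
          (1 + log (⌊X⌋₊ + 1 : ℕ)) := by
        ring
    _ ≤ 2 * (2 * X ^ max 1 a) * (7 / 2 * log X) := by
        gcongr 2 * ?_ * ?_
        · exact rpow_mul_rpow_max_le (by linarith) (Nat.cast_nonneg _) hMX ha
        · exact one_add_log_le_mul_log hX (Nat.cast_pos.mpr (Nat.succ_pos _)) hMX
    _ = 14 * X ^ max 1 a * log X := by ring

theorem sum_Icc_floor_div_rpow_le_div {X a : ℝ} (hX : 1 ≤ X) (ha0 : 0 ≤ a) (ha1 : a ≠ 1)
    (ha2 : a ≤ 2) :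
    ∑ n ∈ Icc (-⌊X⌋) ⌊X⌋, (X / (1 + |(n : ℝ)|)) ^ a ≤
      8 * X ^ max 1 a / |1 - a| := by
  have hMX := natCast_floor_add_one_le_two_mul hX
  calc _ ≤ 2 * X ^ a * ∑ k ∈ range (⌊X⌋₊ + 1), ((k : ℝ) + 1) ^ (-a) :=
        sum_Icc_floor_div_rpow_le (by linarith) a
    _ ≤ 2 * X ^ a * (((⌊X⌋₊ + 1 : ℕ) : ℝ) ^ max 0 (1 - a) * (max 1 a / |1 - a|)) := by
        gcongr
        exact sum_range_rpow_neg_le_mul_div ha0 ha1 (Nat.succ_pos _)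
    _ = 2 * (X ^ a * ((⌊X⌋₊ + 1 : ℕ) : ℝ) ^ max 0 (1 - a)) * max 1 a / |1 - a| := by
        ring
    _ ≤ 2 * (2 * X ^ max 1 a) * 2 / |1 - a| := by
        gcongr 2 * ?_ * ?_ / _
        · exact rpow_mul_rpow_max_le (by linarith) (Nat.cast_nonneg _) hMX ha0
        · exact max_le one_le_two ha2
    _ = 8 * X ^ max 1 a / |1 - a| := by ring

theorem abs_sub_goldenRatio_le {q : ℝ} (hq : 1 ≤ q) : |q - φ| ≤ |1 - q * (q - 1)| := by
  have hfactor : 1 - q * (q - 1) = -((q - φ) * (q - ψ)) := by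
    linear_combination (-q) * goldenRatio_add_goldenConj + goldenRatio_mul_goldenConj
  have hψ : 1 ≤ q - ψ := by linarith [goldenConj_neg]
  rw [hfactor, abs_neg, abs_mul, abs_of_pos (by linarith : 0 < q - ψ)]
  exact le_mul_of_one_le_right (abs_nonneg _) hψ

/-- For real `1 ≤ q < 2` and `X ≥ 2`,
`Σ_{|n| ≤ X} (X/(1+|n|))^{q(q-1)} ≪ X^{max{1, q(q-1)}} · min{log X, 1/|q - q₀|}`,
where `q₀ = (1+√5)/2` is the golden ratio (so that at `q = q₀` the factor is `log X`). -/
theorem golden_ratio_sum_bound :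
    ∃ C : ℝ, 0 < C ∧
      ∀ q X : ℝ, 1 ≤ q → q < 2 → 2 ≤ X →
        ∑ n ∈ Finset.Icc (-⌊X⌋) ⌊X⌋,
            (X / (1 + |(n : ℝ)|)) ^ (q * (q - 1)) ≤
          C * X ^ max 1 (q * (q - 1)) *
            (if q = (1 + Real.sqrt 5) / 2 then Real.log X
             else min (Real.log X) (1 / |q - (1 + Real.sqrt 5) / 2|)) := by
  refine ⟨14, by norm_num, fun q X hq1 hq2 hX => ?_⟩
  have ha0 : 0 ≤ q * (q - 1) := by nlinarith
  have ha2 : q * (q - 1) ≤ 2 := by nlinarith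
  have hlog := sum_Icc_floor_div_rpow_le_mul_log hX ha0
  split_ifs with hq
  · exact hlog
  have hqφ : 0 < |q - φ| := abs_pos.mpr (sub_ne_zero.mpr hq)
  have hφ := abs_sub_goldenRatio_le hq1
  have ha1 : q * (q - 1) ≠ 1 := fun h => by
    rw [h, sub_self, abs_zero] at hφ
    linarith
  have hdiv := sum_Icc_floor_div_rpow_le_div (one_le_two.trans hX) ha0 ha1 ha2
  rw [mul_min_of_nonneg _ _ (by positivity)]
  refine le_min hlog (hdiv.trans ?_)
  calc 8 * X ^ max 1 (q * (q - 1)) / |1 - q * (q - 1)|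
      ≤ 8 * X ^ max 1 (q * (q - 1)) / |q - φ| := by gcongr
    _ ≤ 14 * X ^ max 1 (q * (q - 1)) * (1 / |q - φ|) := by
      rw [mul_one_div]
      gcongr
      norm_num
end
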